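/- arXiv:1004.1639 — 7 statements merged into one kernel-verified Lean document; each statement's English description precedes it below -/
import Mathlib

section
/- Let H be a complex Hilbert space and A : H →L[ℂ] H a bounded self-adjoint operator whose real spectrum is contained in [1, ∞). Then for every real α > 0 and every u ∈ H, the function s ↦ s^(2α−1)·‖cfc (fun x : ℝ => Real.exp (−s*x)) A u‖² is integrable on (0,∞) and ‖cfc (fun x : ℝ => x^(−α)) A u‖² = (2^(2α) / Γ(2α)) · ∫₀^∞ s^(2α−1) · ‖cfc (fun x : ℝ => Real.exp (−s*x)) A u‖² ds. (This is identity (0.1) of the paper, expressing the negative-power norm of A through the heat semigroup e^{−sA}, stated for a bounded self-adjoint operator A ≥ I.) -/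
/-!
For `x > 0` the Gamma integral gives `∫₀^∞ s^(β-1) e^(-2sx) ds = Γ(β) (2x)^(-β)`. Since the
spectrum of `A` is bounded away from `0`, this integrand is dominated uniformly on the spectrum,
so the functional calculus commutes with the integral:
`∫₀^∞ s^(β-1) e^(-2sA) ds = Γ(β) 2^(-β) A^(-β)`. Taking `β = 2α` and applying the continuous
functional `T ↦ Re ⟪u, T u⟫` turns `e^(-2sA)` into `‖e^(-sA) u‖²` and `A^(-2α)` into `‖A^(-α) u‖²`.
-/

open MeasureTheory Set Real

lemma integrableOn_rpow_mul_exp_neg_mul_Ioi {p b : ℝ} (hp : 0 < p) (hb : 0 < b) :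
    IntegrableOn (fun s : ℝ => s ^ (p - 1) * exp (-(b * s))) (Ioi 0) := by
  simpa [rpow_one, neg_mul] using
    integrableOn_rpow_mul_exp_neg_mul_rpow (p := 1) (s := p - 1) (by linarith) one_pos hb

section MellinHeat

variable {A : Type*} [NormedRing A] [StarRing A] [NormedAlgebra ℝ A] [CompleteSpace A]
  [ContinuousFunctionalCalculus ℝ A IsSelfAdjoint] {a : A} {c p r : ℝ}

lemma continuousOn_rpow_mul_exp_neg_mul (p r : ℝ) (S : Set ℝ) :
    ContinuousOn (Function.uncurry fun s x : ℝ => s ^ (p - 1) * exp (-(r * x * s)))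
      (Ioi 0 ×ˢ S) := by
  intro z hz
  have hz0 : z.1 ≠ 0 := (mem_Ioi.mp hz.1).ne'
  exact ((continuousAt_fst.rpow_const (.inl hz0)).mul (by fun_prop)).continuousWithinAt

lemma continuousOn_rpow_const_of_subset_Ici {S : Set ℝ} (hc : 0 < c) (hS : S ⊆ Ici c)
    (q : ℝ) : ContinuousOn (fun x : ℝ => x ^ q) S :=
  continuousOn_id.rpow_const fun _ hx => .inl (hc.trans_le (hS hx)).ne'

lemma norm_rpow_mul_exp_neg_mul_le (hr : 0 ≤ r) {s x : ℝ} (hs : 0 < s) (hx : c ≤ x) :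
    ‖s ^ (p - 1) * exp (-(r * x * s))‖ ≤ s ^ (p - 1) * exp (-(r * c * s)) := by
  rw [norm_mul, norm_of_nonneg (rpow_nonneg hs.le _), norm_of_nonneg (exp_nonneg _)]
  gcongr

lemma integrableOn_cfc_rpow_mul_exp_neg_mul (hc : 0 < c) (hspec : spectrum ℝ a ⊆ Ici c)
    (hp : 0 < p) (hr : 0 < r) (ha : IsSelfAdjoint a := by cfc_tac) :
    IntegrableOn (fun s => cfc (fun x => s ^ (p - 1) * exp (-(r * x * s))) a) (Ioi 0) :=
  integrableOn_cfc measurableSet_Ioi _ _ a (continuousOn_rpow_mul_exp_neg_mul p r _)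
    (ae_restrict_of_forall_mem measurableSet_Ioi fun _ hs _ hx =>
      norm_rpow_mul_exp_neg_mul_le hr.le hs (hspec hx))
    (integrableOn_rpow_mul_exp_neg_mul_Ioi hp (by positivity)).hasFiniteIntegral

theorem setIntegral_cfc_rpow_mul_exp_neg_mul (hc : 0 < c) (hspec : spectrum ℝ a ⊆ Ici c)
    (hp : 0 < p) (hr : 0 < r) (ha : IsSelfAdjoint a := by cfc_tac) :
    ∫ s in Ioi 0, cfc (fun x => s ^ (p - 1) * exp (-(r * x * s))) a =
      (Gamma p / r ^ p) • cfc (fun x : ℝ => x ^ (-p)) a := by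
  rw [← cfc_setIntegral measurableSet_Ioi _ _ a (continuousOn_rpow_mul_exp_neg_mul p r _)
    (ae_restrict_of_forall_mem measurableSet_Ioi fun _ hs _ hx =>
      norm_rpow_mul_exp_neg_mul_le hr.le hs (hspec hx))
    (integrableOn_rpow_mul_exp_neg_mul_Ioi hp (by positivity)).hasFiniteIntegral,
    ← cfc_const_mul _ _ a (continuousOn_rpow_const_of_subset_Ici hc hspec _)]
  refine cfc_congr fun x hx => ?_
  have hx0 : 0 < x := hc.trans_le (hspec hx)
  rw [integral_rpow_mul_exp_neg_mul_Ioi hp (by positivity), one_div, inv_rpow (by positivity),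
    mul_rpow hr.le hx0.le, rpow_neg hx0.le]
  field_simp

end MellinHeat

section Hilbert

variable {H : Type*} [NormedAddCommGroup H] [InnerProductSpace ℂ H]

noncomputable def reInnerApplyCLM (u : H) : (H →L[ℂ] H) →L[ℝ] ℝ :=
  Complex.reCLM.comp
    (((innerSL ℂ u).comp (ContinuousLinearMap.apply ℂ H u)).restrictScalars ℝ)

lemma norm_cfc_apply_sq [CompleteSpace H] (A : H →L[ℂ] H) (f : ℝ → ℝ) (u : H)
    (hf : ContinuousOn f (spectrum ℝ A) := by cfc_cont_tac) :
    ‖cfc f A u‖ ^ 2 = reInnerApplyCLM u (cfc (fun x => f x * f x) A) := by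
  rw [cfc_mul f f A, ContinuousLinearMap.apply_norm_sq_eq_inner_adjoint_right,
    (cfc_predicate f A).adjoint_eq]
  rfl

end Hilbert

/-- Identity (0.1): for a bounded self-adjoint operator `A ≥ I` on a complex Hilbert
space, `‖A^{-α} u‖² = (2^{2α}/Γ(2α)) ∫₀^∞ s^{2α-1} ‖e^{-sA} u‖² ds`. -/
theorem stmt_0 {H : Type*} [NormedAddCommGroup H] [InnerProductSpace ℂ H]
    [CompleteSpace H] (A : H →L[ℂ] H) (hA : IsSelfAdjoint A)
    (hspec : spectrum ℝ A ⊆ Set.Ici (1 : ℝ)) (α : ℝ) (hα : 0 < α) (u : H) :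
    IntegrableOn
      (fun s : ℝ => s ^ (2 * α - 1) * ‖cfc (fun x : ℝ => Real.exp (-s * x)) A u‖ ^ 2)
      (Set.Ioi (0 : ℝ)) ∧
    ‖cfc (fun x : ℝ => x ^ (-α)) A u‖ ^ 2 =
      ((2 : ℝ) ^ (2 * α) / Real.Gamma (2 * α)) *
        ∫ s in Set.Ioi (0 : ℝ),
          s ^ (2 * α - 1) * ‖cfc (fun x : ℝ => Real.exp (-s * x)) A u‖ ^ 2 := by
  have hβ : 0 < 2 * α := by positivity
  have hkernel (s : ℝ) :
      reInnerApplyCLM u (cfc (fun x => s ^ (2 * α - 1) * exp (-(2 * x * s))) A) =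
        s ^ (2 * α - 1) * ‖cfc (fun x : ℝ => exp (-s * x)) A u‖ ^ 2 := by
    rw [cfc_const_mul _ _ A, map_smul, smul_eq_mul, norm_cfc_apply_sq A _ u]
    congr 3
    funext x
    rw [← exp_add]
    ring_nf
  have hnorm : ‖cfc (fun x : ℝ => x ^ (-α)) A u‖ ^ 2
      = reInnerApplyCLM u (cfc (fun x : ℝ => x ^ (-(2 * α))) A) := by
    rw [norm_cfc_apply_sq A _ u (continuousOn_rpow_const_of_subset_Ici one_pos hspec _)]
    congr 1
    refine cfc_congr fun x hx => ?_
    rw [← rpow_add (one_pos.trans_le (hspec hx))]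
    ring_nf
  have hint := integrableOn_cfc_rpow_mul_exp_neg_mul one_pos hspec hβ two_pos
  refine ⟨((reInnerApplyCLM u).integrable_comp hint).congr (.of_forall hkernel), ?_⟩
  rw [← integral_congr_ae (.of_forall hkernel), (reInnerApplyCLM u).integral_comp_comm hint,
    setIntegral_cfc_rpow_mul_exp_neg_mul one_pos hspec hβ two_pos, map_smul, smul_eq_mul, hnorm]
  have hΓ := (Gamma_pos_of_pos hβ).ne'
  field_simp
end

section
/- Let 0 < T ≤ ∞, let ψ : (0,T) → ℝ be differentiable, let b : (0,T) → ℝ be continuous with b(s) ≥ 0 for all s, and let x : (0,T) → ℝ be differentiable with x(s) ≥ 0 and x′(s) ≤ −b(s) + ψ′(s)·x(s) for every s ∈ (0,T). Fix t ∈ (0,T) and assume the function s ↦ s^(1/2)·e^(−ψ(s))·x(s) is integrable on (0,t). Then the function s ↦ s^(3/2)·e^(−ψ(s))·b(s) is integrable on (0,t) and t^(3/2)·e^(−ψ(t))·x(t) + ∫₀ᵗ s^(3/2) e^(−ψ(s)) b(s) ds ≤ (3/2)·∫₀ᵗ s^(1/2) e^(−ψ(s)) x(s) ds. (This is the real-variable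 inequality underlying Proposition 6.4, the order-one apriori estimate for solutions of finite action, with x(s) = ‖A′(s)‖₂², b(s) = ‖B′(s)‖₂² and ψ the accumulated Gaffney constant.) -/
open MeasureTheory ENNReal

/-- The real-variable inequality underlying Proposition 6.4 (order-one apriori
estimate for finite action): if `x' ≤ -b + ψ'·x` on `(0,T)` with `x, b ≥ 0`, and
`s ↦ s^{1/2} e^{-ψ(s)} x(s)` is integrable on `(0,t)`, then
`s ↦ s^{3/2} e^{-ψ(s)} b(s)` is integrable on `(0,t)` and
`t^{3/2} e^{-ψ(t)} x(t) + ∫₀ᵗ s^{3/2} e^{-ψ(s)} b(s) ds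
  ≤ (3/2) ∫₀ᵗ s^{1/2} e^{-ψ(s)} x(s) ds`. -/
theorem stmt_3 (T : ℝ≥0∞) (hT : 0 < T) (ψ ψ' b x x' : ℝ → ℝ)
    (hψ : ∀ s : ℝ, 0 < s → ENNReal.ofReal s < T → HasDerivAt ψ (ψ' s) s)
    (hb_cont : ContinuousOn b {s : ℝ | 0 < s ∧ ENNReal.ofReal s < T})
    (hb_nonneg : ∀ s : ℝ, 0 < s → ENNReal.ofReal s < T → 0 ≤ b s)
    (hx : ∀ s : ℝ, 0 < s → ENNReal.ofReal s < T → HasDerivAt x (x' s) s)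
    (hx_nonneg : ∀ s : ℝ, 0 < s → ENNReal.ofReal s < T → 0 ≤ x s)
    (hx'le : ∀ s : ℝ, 0 < s → ENNReal.ofReal s < T → x' s ≤ -(b s) + ψ' s * x s)
    (t : ℝ) (ht : 0 < t) (htT : ENNReal.ofReal t < T)
    (hint : IntegrableOn
      (fun s : ℝ => s ^ ((1 : ℝ)/2) * Real.exp (-ψ s) * x s) (Set.Ioo 0 t)) :
    IntegrableOn
      (fun s : ℝ => s ^ ((3 : ℝ)/2) * Real.exp (-ψ s) * b s) (Set.Ioo 0 t) ∧
    t ^ ((3 : ℝ)/2) * Real.exp (-ψ t) * x t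
        + ∫ s in Set.Ioo (0 : ℝ) t, s ^ ((3 : ℝ)/2) * Real.exp (-ψ s) * b s
      ≤ (3/2) * ∫ s in Set.Ioo (0 : ℝ) t, s ^ ((1 : ℝ)/2) * Real.exp (-ψ s) * x s := by
  classical
  set D : Set ℝ := {s : ℝ | 0 < s ∧ ENNReal.ofReal s < T} with hDdef
  have hD : IsOpen D := by
    have hDeq : D = Set.Ioi (0:ℝ) ∩ (ENNReal.ofReal ⁻¹' Set.Iio T) := rfl
    rw [hDeq]
    exact isOpen_Ioi.inter (isOpen_Iio.preimage ENNReal.continuous_ofReal)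
  have hsub : Set.Ioc 0 t ⊆ D := fun s hs =>
    ⟨hs.1, lt_of_le_of_lt (ENNReal.ofReal_le_ofReal hs.2) htT⟩
  set F : ℝ → ℝ := fun s => s ^ ((3 : ℝ)/2) * Real.exp (-ψ s) * x s with hFdef
  set g : ℝ → ℝ := fun s => s ^ ((1 : ℝ)/2) * Real.exp (-ψ s) * x s with hgdef
  set g0 : ℝ → ℝ := fun s => (3/2) * g s with hg0def
  set h : ℝ → ℝ := fun s => s ^ ((3 : ℝ)/2) * Real.exp (-ψ s) * b s with hhdef
  -- continuity on D
  have hψc : ContinuousOn ψ D := fun s hs =>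
    ((hψ s hs.1 hs.2).continuousAt).continuousWithinAt
  have hxc : ContinuousOn x D := fun s hs =>
    ((hx s hs.1 hs.2).continuousAt).continuousWithinAt
  have hrc32 : ContinuousOn (fun s : ℝ => s ^ ((3 : ℝ)/2)) D := fun s hs =>
    (Real.continuousAt_rpow_const s _ (Or.inl (ne_of_gt hs.1))).continuousWithinAt
  have hrc12 : ContinuousOn (fun s : ℝ => s ^ ((1 : ℝ)/2)) D := fun s hs =>
    (Real.continuousAt_rpow_const s _ (Or.inl (ne_of_gt hs.1))).continuousWithinAt
  have hec : ContinuousOn (fun s : ℝ => Real.exp (-ψ s)) D := (hψc.neg).rexp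
  have hhc : ContinuousOn h D := (hrc32.mul hec).mul hb_cont
  have hg0c : ContinuousOn g0 D := continuousOn_const.mul ((hrc12.mul hec).mul hxc)
  have hFc : ContinuousOn F D := (hrc32.mul hec).mul hxc
  -- nonnegativity
  have hFnn : ∀ s ∈ D, 0 ≤ F s := fun s hs =>
    mul_nonneg (mul_nonneg (Real.rpow_nonneg hs.1.le _) (Real.exp_pos _).le)
      (hx_nonneg s hs.1 hs.2)
  have hhnn : ∀ s ∈ D, 0 ≤ h s := fun s hs =>
    mul_nonneg (mul_nonneg (Real.rpow_nonneg hs.1.le _) (Real.exp_pos _).le)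
      (hb_nonneg s hs.1 hs.2)
  have hgnn : ∀ s ∈ D, 0 ≤ g s := fun s hs =>
    mul_nonneg (mul_nonneg (Real.rpow_nonneg hs.1.le _) (Real.exp_pos _).le)
      (hx_nonneg s hs.1 hs.2)
  -- derivative of F on D
  have hF' : ∀ s ∈ D, HasDerivAt F
      (((3/2) * s ^ ((1:ℝ)/2) * Real.exp (-ψ s)
        + s ^ ((3:ℝ)/2) * (Real.exp (-ψ s) * (-ψ' s))) * x s
        + s ^ ((3:ℝ)/2) * Real.exp (-ψ s) * x' s) s := by
    intro s hs
    have h1 : HasDerivAt (fun u : ℝ => u ^ ((3:ℝ)/2)) ((3:ℝ)/2 * s ^ ((3:ℝ)/2 - 1)) s :=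
      Real.hasDerivAt_rpow_const (Or.inl (ne_of_gt hs.1))
    rw [show (3:ℝ)/2 - 1 = (1:ℝ)/2 by norm_num] at h1
    have h2 : HasDerivAt (fun u : ℝ => Real.exp (-ψ u))
        (Real.exp (-ψ s) * (-ψ' s)) s := ((hψ s hs.1 hs.2).neg).exp
    exact ((h1.mul h2).mul (hx s hs.1 hs.2))
  -- key inequality on [ε, t]
  have key : ∀ ε : ℝ, 0 < ε → ε < t →
      F t + ∫ s in Set.Ioo ε t, h s ≤ F ε + ∫ s in Set.Ioo ε t, g0 s := by
    intro ε hε hεt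
    have hIccD : Set.Icc ε t ⊆ D := fun s hs => hsub ⟨lt_of_lt_of_le hε hs.1, hs.2⟩
    have hmemD : ∀ s ∈ Set.Icc ε t, s ∈ D := fun s hs => hIccD hs
    have hII : ∀ s ∈ Set.Icc ε t, IntervalIntegrable h volume ε s := by
      intro s hs
      have : Set.uIcc ε s ⊆ D := by
        rw [Set.uIcc_of_le hs.1]
        exact fun r hr => hIccD ⟨hr.1, le_trans hr.2 hs.2⟩
      exact (hhc.mono this).intervalIntegrable
    have hII0 : ∀ s ∈ Set.Icc ε t, IntervalIntegrable g0 volume ε s := by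
      intro s hs
      have : Set.uIcc ε s ⊆ D := by
        rw [Set.uIcc_of_le hs.1]
        exact fun r hr => hIccD ⟨hr.1, le_trans hr.2 hs.2⟩
      exact (hg0c.mono this).intervalIntegrable
    set φ : ℝ → ℝ := fun u => F u + (∫ r in ε..u, h r) - (∫ r in ε..u, g0 r)
      with hφdef
    have hφ' : ∀ s ∈ Set.Icc ε t, HasDerivAt φ
        ((((3/2) * s ^ ((1:ℝ)/2) * Real.exp (-ψ s)
          + s ^ ((3:ℝ)/2) * (Real.exp (-ψ s) * (-ψ' s))) * x s
          + s ^ ((3:ℝ)/2) * Real.exp (-ψ s) * x' s) + h s - g0 s) s := by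
      intro s hs
      have hsD := hmemD s hs
      have d1 : HasDerivAt (fun u => ∫ r in ε..u, h r) (h s) s :=
        intervalIntegral.integral_hasDerivAt_right (hII s hs)
          (ContinuousOn.stronglyMeasurableAtFilter hD hhc s hsD)
          (hhc.continuousAt (hD.mem_nhds hsD))
      have d2 : HasDerivAt (fun u => ∫ r in ε..u, g0 r) (g0 s) s :=
        intervalIntegral.integral_hasDerivAt_right (hII0 s hs)
          (ContinuousOn.stronglyMeasurableAtFilter hD hg0c s hsD)
          (hg0c.continuousAt (hD.mem_nhds hsD))
      exact ((hF' s hsD).add d1).sub d2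
    have hderiv_le : ∀ s ∈ Set.Icc ε t,
        (((3/2) * s ^ ((1:ℝ)/2) * Real.exp (-ψ s)
          + s ^ ((3:ℝ)/2) * (Real.exp (-ψ s) * (-ψ' s))) * x s
          + s ^ ((3:ℝ)/2) * Real.exp (-ψ s) * x' s) + h s - g0 s ≤ 0 := by
      intro s hs
      have hsD := hmemD s hs
      have h1 : x' s + b s - ψ' s * x s ≤ 0 := by
        have := hx'le s hsD.1 hsD.2; linarith
      have h2 : (0:ℝ) ≤ s ^ ((3:ℝ)/2) * Real.exp (-ψ s) :=
        mul_nonneg (Real.rpow_nonneg hsD.1.le _) (Real.exp_pos _).le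
      have heq : (((3/2) * s ^ ((1:ℝ)/2) * Real.exp (-ψ s)
          + s ^ ((3:ℝ)/2) * (Real.exp (-ψ s) * (-ψ' s))) * x s
          + s ^ ((3:ℝ)/2) * Real.exp (-ψ s) * x' s) + h s - g0 s
          = (s ^ ((3:ℝ)/2) * Real.exp (-ψ s)) * (x' s + b s - ψ' s * x s) := by
        simp only [hhdef, hg0def, hgdef]; ring
      rw [heq]
      exact mul_nonpos_of_nonneg_of_nonpos h2 h1
    have hanti : AntitoneOn φ (Set.Icc ε t) := by
      apply antitoneOn_of_deriv_nonpos (convex_Icc ε t)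
      · exact fun s hs => ((hφ' s hs).continuousAt).continuousWithinAt
      · intro s hs
        rw [interior_Icc] at hs
        exact ((hφ' s (Set.Ioo_subset_Icc_self hs)).differentiableAt).differentiableWithinAt
      · intro s hs
        rw [interior_Icc] at hs
        have hs' := Set.Ioo_subset_Icc_self hs
        rw [(hφ' s hs').deriv]
        exact hderiv_le s hs'
    have hφt : φ t ≤ φ ε :=
      hanti (Set.left_mem_Icc.2 hεt.le) (Set.right_mem_Icc.2 hεt.le) hεt.le
    have hφε : φ ε = F ε := by simp [hφdef]
    have hconv : ∀ f : ℝ → ℝ, (∫ r in ε..t, f r) = ∫ s in Set.Ioo ε t, f s := by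
      intro f
      rw [intervalIntegral.integral_of_le hεt.le, integral_Ioc_eq_integral_Ioo]
    have hφt' : φ t = F t + (∫ s in Set.Ioo ε t, h s) - ∫ s in Set.Ioo ε t, g0 s := by
      rw [hφdef]; simp only [hconv]
    rw [hφε, hφt'] at hφt
    linarith
  -- integrability of g0 and bound of its integrals
  have hg0int : IntegrableOn g0 (Set.Ioo 0 t) := by
    exact (hint.const_mul _)
  have hg0mono : ∀ ε : ℝ, 0 < ε → ε < t →
      (∫ s in Set.Ioo ε t, g0 s) ≤ ∫ s in Set.Ioo 0 t, g0 s := by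
    intro ε hε hεt
    apply setIntegral_mono_set hg0int
    · filter_upwards [ae_restrict_mem measurableSet_Ioo] with s hs
      exact mul_nonneg (by norm_num) (hgnn s (hsub ⟨hs.1, hs.2.le⟩))
    · exact (Set.Ioo_subset_Ioo_left hε.le).eventuallyLE
  set C : ℝ := ∫ s in Set.Ioo 0 t, g0 s with hCdef
  -- small values of F near 0
  have hsmall : ∀ n : ℕ, ∃ ε : ℝ, 0 < ε ∧ ε < t ∧ ε < 1/(n+1) ∧ F ε < 1/(n+1) := by
    intro n
    by_contra hcon
    push_neg at hcon
    set m : ℝ := min t (1/(n+1)) with hmdef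
    have hm : 0 < m := lt_min ht (by positivity)
    have hbound : ∀ s ∈ Set.Ioo (0:ℝ) m, (1/(n+1) : ℝ) * s⁻¹ ≤ g s := by
      intro s hs
      have hst : s < t := lt_of_lt_of_le hs.2 (min_le_left _ _)
      have hsn : s < 1/(n+1) := lt_of_lt_of_le hs.2 (min_le_right _ _)
      have hFs : (1/(n+1) : ℝ) ≤ F s := hcon s hs.1 hst hsn
      have hgs : g s = F s * s⁻¹ := by
        have : s ^ ((1:ℝ)/2) = s ^ ((3:ℝ)/2) * s⁻¹ := by
          rw [← Real.rpow_neg_one s, ← Real.rpow_add hs.1]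
          norm_num
        simp only [hFdef, hgdef, this]; ring
      rw [hgs]
      exact mul_le_mul_of_nonneg_right hFs (inv_nonneg.2 hs.1.le)
    have hginv : IntegrableOn (fun s : ℝ => (1/(n+1) : ℝ) * s⁻¹) (Set.Ioo 0 m) := by
      have hgint : IntegrableOn g (Set.Ioo 0 m) :=
        hint.mono_set (Set.Ioo_subset_Ioo_right (min_le_left _ _))
      apply Integrable.mono hgint
      · exact (measurable_const.mul measurable_inv).aestronglyMeasurable
      · filter_upwards [ae_restrict_mem measurableSet_Ioo] with s hs
        have h1 : (0:ℝ) ≤ (1/(n+1) : ℝ) * s⁻¹ := mul_nonneg (by positivity) (inv_nonneg.2 hs.1.le)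
        have h2 : 0 ≤ g s := hgnn s (hsub ⟨hs.1, (lt_of_lt_of_le hs.2 (min_le_left _ _)).le⟩)
        rw [Real.norm_of_nonneg h1, Real.norm_of_nonneg h2]
        exact hbound s hs
    have hinv : IntegrableOn (fun s : ℝ => s⁻¹) (Set.Ioo 0 m) := by
      have := hginv.const_mul ((n+1 : ℝ))
      have heq : (fun s : ℝ => (n+1:ℝ) * ((1/(n+1) : ℝ) * s⁻¹)) = fun s : ℝ => s⁻¹ := by
        funext s
        rw [one_div, ← mul_assoc, mul_inv_cancel₀ (by positivity : (n+1:ℝ) ≠ 0), one_mul]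
      rwa [heq] at this
    have : IntegrableOn (fun s : ℝ => s ^ (-1 : ℝ)) (Set.Ioo 0 m) := by
      have heq2 : (fun s : ℝ => s ^ (-1 : ℝ)) = fun s : ℝ => s⁻¹ :=
        funext fun s => Real.rpow_neg_one s
      rw [heq2]; exact hinv
    rw [intervalIntegral.integrableOn_Ioo_rpow_iff hm] at this
    linarith
  choose ε hε1 hε2 hε3 hε4 using hsmall
  have hεlim : Filter.Tendsto ε Filter.atTop (nhds 0) :=
    squeeze_zero (fun n => (hε1 n).le) (fun n => (hε3 n).le)
      tendsto_one_div_add_atTop_nhds_zero_nat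
  -- integrability of h on (0,t)
  have hIocD : Set.Ioc 0 t ⊆ D := hsub
  have hint_h_n : ∀ n : ℕ, IntegrableOn h (Set.Ioc (ε n) t) := by
    intro n
    have hIcc : Set.Icc (ε n) t ⊆ D := fun s hs =>
      hsub ⟨lt_of_lt_of_le (hε1 n) hs.1, hs.2⟩
    exact ((hhc.mono hIcc).integrableOn_Icc).mono_set Set.Ioc_subset_Icc_self
  have hbound_n : ∀ n : ℕ, (∫ s in Set.Ioc (ε n) t, ‖h s‖) ≤ 1 + C - F t := by
    intro n
    have h1 : (∫ s in Set.Ioc (ε n) t, ‖h s‖) = ∫ s in Set.Ioo (ε n) t, h s := by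
      rw [integral_Ioc_eq_integral_Ioo]
      apply setIntegral_congr_fun measurableSet_Ioo
      intro s hs
      exact Real.norm_of_nonneg (hhnn s (hsub ⟨lt_trans (hε1 n) hs.1, hs.2.le⟩))
    rw [h1]
    have h2 := key (ε n) (hε1 n) (hε2 n)
    have h3 := hg0mono (ε n) (hε1 n) (hε2 n)
    have h4 : F (ε n) < 1 := lt_of_lt_of_le (hε4 n) (by
      rw [div_le_one (by positivity)]; norm_num)
    linarith
  have hint_h : IntegrableOn h (Set.Ioo 0 t) := by
    have : IntegrableOn h (Set.Ioc 0 t) := by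
      apply integrableOn_Ioc_of_intervalIntegral_norm_bounded_left
        (I := 1 + C - F t) hint_h_n hεlim
      exact Filter.Eventually.of_forall hbound_n
    exact this.mono_set Set.Ioo_subset_Ioc_self
  refine ⟨hint_h, ?_⟩
  -- limit argument
  have hFε0 : Filter.Tendsto (fun n => F (ε n)) Filter.atTop (nhds 0) := by
    apply squeeze_zero (fun n => hFnn (ε n) (hsub ⟨hε1 n, (hε2 n).le⟩))
      (fun n => (hε4 n).le) tendsto_one_div_add_atTop_nhds_zero_nat
  have hrhs : Filter.Tendsto (fun n => F (ε n) + C) Filter.atTop (nhds C) := by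
    have := hFε0.add_const C
    rwa [zero_add] at this
  have hlhs : Filter.Tendsto (fun n => F t + ∫ s in Set.Ioo (ε n) t, h s)
      Filter.atTop (nhds (F t + ∫ s in Set.Ioo 0 t, h s)) := by
    apply Filter.Tendsto.const_add
    have heqint : ∀ n : ℕ, (∫ s in Set.Ioo (ε n) t, h s)
        = ∫ s, (Set.Ioi (ε n)).indicator h s ∂(volume.restrict (Set.Ioo 0 t)) := by
      intro n
      rw [integral_indicator measurableSet_Ioi,
        Measure.restrict_restrict measurableSet_Ioi, Set.Ioi_inter_Ioo,
        max_eq_left (hε1 n).le]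
    simp only [heqint]
    apply tendsto_integral_of_dominated_convergence (fun s => ‖h s‖)
    · exact fun n => hint_h.aestronglyMeasurable.indicator measurableSet_Ioi
    · exact hint_h.norm
    · intro n
      filter_upwards with s
      exact norm_indicator_le_norm_self h s
    · filter_upwards [ae_restrict_mem measurableSet_Ioo] with s hs
      have hev : ∀ᶠ n in Filter.atTop, (Set.Ioi (ε n)).indicator h s = h s := by
        filter_upwards [hεlim.eventually (eventually_lt_nhds hs.1)] with n hn
        exact Set.indicator_of_mem hn h
      exact Filter.Tendsto.congr' (Filter.EventuallyEq.symm hev) tendsto_const_nhds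
  have hfinal : F t + (∫ s in Set.Ioo 0 t, h s) ≤ C := by
    apply le_of_tendsto_of_tendsto' hlhs hrhs
    intro n
    have h2 := key (ε n) (hε1 n) (hε2 n)
    have h3 := hg0mono (ε n) (hε1 n) (hε2 n)
    linarith
  have hC : C = (3/2) * ∫ s in Set.Ioo 0 t, g s := by
    rw [hCdef, hg0def]
    exact integral_const_mul _ _
  rw [hC] at hfinal
  exact hfinal
end

section
/- Let (X, μ) be a σ-finite measure space, let f : ℝ → X → ℝ be such that (s,x) ↦ f s x is measurable, let 0 ≤ a < b < ∞ and 2 ≤ p < 6, and set α := (6−p)/4 and β := (p−2)/4 (so that p = 2α + 6β and α + β = 1 with 0 ≤ β < 1). Then, with all s-integrals taken as lower Lebesgue integrals over (a,b) with values in ℝ≥0∞, ∫ₐᵇ ‖f(s)‖_p ds ≤ (∫ₐᵇ s^(3/p − 3/2) ds)^(1/2) · (∫ₐᵇ ‖f(s)‖₂² ds)^(α/p) · (∫ₐᵇ s·‖f(s)‖₆² ds)^(3β/p). (This is Lemma 6.5, the interpolation lemma used to prove the L⁴-in-time integrability of A′ in Corollary 7.2.) -/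
/-!
Pointwise in `s`, Hölder's inequality in `x` (log-convexity of `q ↦ ‖g‖_q^q`) interpolates
`‖f s‖_p` between `‖f s‖₂` and `‖f s‖₆`, since `p = 2α + 6β` with `α + β = 1`. The factor
`s^((3/p - 3/2)/2) · s^(3β/p) = 1` inserts the weights, and Hölder's inequality in `s` with the
three exponents `1/2 + α/p + 3β/p = 1` separates the three integrals.
-/

open MeasureTheory ENNReal

section Interpolation

variable {X E : Type*} [MeasurableSpace X] {μ : Measure X} [NormedAddCommGroup E]

theorem ENNReal.lintegral_rpow_mul_rpow_mul_rpow_le {f g h : X → ℝ≥0∞}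
    (hf : AEMeasurable f μ) (hg : AEMeasurable g μ) (hh : AEMeasurable h μ) {p q r : ℝ}
    (hp : 0 ≤ p) (hq : 0 ≤ q) (hr : 0 ≤ r) (hpqr : p + q + r = 1) :
    ∫⁻ x, f x ^ p * g x ^ q * h x ^ r ∂μ ≤
      (∫⁻ x, f x ∂μ) ^ p * (∫⁻ x, g x ∂μ) ^ q * (∫⁻ x, h x ∂μ) ^ r := by
  simpa [Fin.prod_univ_three] using
    ENNReal.lintegral_prod_norm_pow_le (μ := μ) Finset.univ (f := ![f, g, h]) (p := ![p, q, r])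
      (by intro i _; fin_cases i <;> assumption) (by simpa [Fin.sum_univ_three] using hpqr)
      (by intro i _; fin_cases i <;> assumption)

theorem lintegral_enorm_rpow_convex_comb_le {g : X → E} (hg : AEStronglyMeasurable g μ)
    {p₀ p₁ α β : ℝ} (hp₀ : 0 ≤ p₀) (hp₁ : 0 ≤ p₁) (hα : 0 ≤ α) (hβ : 0 ≤ β) (hαβ : α + β = 1) :
    ∫⁻ x, ‖g x‖ₑ ^ (α * p₀ + β * p₁) ∂μ ≤
      (∫⁻ x, ‖g x‖ₑ ^ p₀ ∂μ) ^ α * (∫⁻ x, ‖g x‖ₑ ^ p₁ ∂μ) ^ β := by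
  refine le_of_eq_of_le ?_ (ENNReal.lintegral_mul_norm_pow_le
    (hg.enorm.pow_const p₀) (hg.enorm.pow_const p₁) hα hβ hαβ)
  congr 1 with x
  rw [← ENNReal.rpow_mul, ← ENNReal.rpow_mul, ← ENNReal.rpow_add_of_nonneg _ _
    (by positivity) (by positivity), mul_comm p₀, mul_comm p₁]

theorem eLpNorm_le_eLpNorm_rpow_mul_eLpNorm_rpow {g : X → E} (hg : AEStronglyMeasurable g μ)
    {p₀ p₁ p α β : ℝ} (hp₀ : 0 < p₀) (hp₁ : 0 < p₁) (hα : 0 ≤ α) (hβ : 0 ≤ β)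
    (hαβ : α + β = 1) (hp : p = α * p₀ + β * p₁) :
    eLpNorm g (.ofReal p) μ ≤
      eLpNorm g (.ofReal p₀) μ ^ (α * p₀ / p) * eLpNorm g (.ofReal p₁) μ ^ (β * p₁ / p) := by
  have hp_pos : 0 < p := by
    nlinarith [mul_le_mul_of_nonneg_left (min_le_left p₀ p₁) hα,
      mul_le_mul_of_nonneg_left (min_le_right p₀ p₁) hβ, lt_min hp₀ hp₁]
  have eLpNorm_ofReal {q : ℝ} (hq : 0 < q) :
      eLpNorm g (.ofReal q) μ = (∫⁻ x, ‖g x‖ₑ ^ q ∂μ) ^ (1 / q) := by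
    rw [eLpNorm_eq_lintegral_rpow_enorm_toReal (ofReal_pos.2 hq).ne' ofReal_ne_top,
      toReal_ofReal hq.le]
  rw [eLpNorm_ofReal hp_pos, eLpNorm_ofReal hp₀, eLpNorm_ofReal hp₁]
  calc (∫⁻ x, ‖g x‖ₑ ^ p ∂μ) ^ (1 / p)
      ≤ ((∫⁻ x, ‖g x‖ₑ ^ p₀ ∂μ) ^ α * (∫⁻ x, ‖g x‖ₑ ^ p₁ ∂μ) ^ β) ^ (1 / p) := by
        gcongr
        exact hp ▸ lintegral_enorm_rpow_convex_comb_le hg hp₀.le hp₁.le hα hβ hαβ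
    _ = _ := by
        rw [ENNReal.mul_rpow_of_nonneg _ _ (by positivity), ← ENNReal.rpow_mul,
          ← ENNReal.rpow_mul, ← ENNReal.rpow_mul, ← ENNReal.rpow_mul]
        congr 2 <;> field_simp

theorem measurable_eLpNorm_of_measurable_uncurry {S : Type*} [MeasurableSpace S] [SFinite μ]
    {f : S → X → ℝ}
    (hf : Measurable (Function.uncurry f)) {q : ℝ≥0∞} (hq₀ : q ≠ 0) (hq : q ≠ ⊤) :
    Measurable fun s => eLpNorm (f s) q μ := by
  simp_rw [eLpNorm_eq_lintegral_rpow_enorm_toReal hq₀ hq]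
  exact (hf.enorm.pow_const _).lintegral_prod_right'.pow_const _

theorem ENNReal.ofReal_rpow_rpow_mul_ofReal_rpow_eq_one {s : ℝ} (hs : 0 < s) {γ c δ : ℝ}
    (h : γ * c + δ = 0) : ENNReal.ofReal (s ^ γ) ^ c * ENNReal.ofReal s ^ δ = 1 := by
  rw [ofReal_rpow_of_pos (Real.rpow_pos_of_pos hs _), ofReal_rpow_of_pos hs,
    ← Real.rpow_mul hs.le, ← ofReal_mul (by positivity), ← Real.rpow_add hs, h,
    Real.rpow_zero, ofReal_one]

theorem eLpNorm_le_eLpNorm_two_sq_rpow_mul_eLpNorm_six_sq_rpow {g : X → ℝ}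
    (hg : AEStronglyMeasurable g μ) {p α β : ℝ}
    (hp2 : 2 ≤ p) (hp6 : p ≤ 6) (hα : α = (6 - p) / 4) (hβ : β = (p - 2) / 4) :
    eLpNorm g (.ofReal p) μ ≤
      (eLpNorm g 2 μ ^ (2 : ℝ)) ^ (α / p) * (eLpNorm g 6 μ ^ (2 : ℝ)) ^ (3 * β / p) := by
  have h := eLpNorm_le_eLpNorm_rpow_mul_eLpNorm_rpow hg (p₀ := 2) (p₁ := 6) (α := α) (β := β)
    (p := p) two_pos (by norm_num) (by rw [hα]; linarith) (by rw [hβ]; linarith)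
    (by rw [hα, hβ]; ring) (by rw [hα, hβ]; ring)
  rw [ofReal_ofNat, ofReal_ofNat] at h
  rw [← ENNReal.rpow_mul, ← ENNReal.rpow_mul]
  convert h using 3 <;> ring

theorem eLpNorm_le_weighted_eLpNorm_two_sq_mul_eLpNorm_six_sq {g : X → ℝ}
    (hg : AEStronglyMeasurable g μ) {s p α β : ℝ} (hs : 0 < s)
    (hp2 : 2 ≤ p) (hp6 : p ≤ 6) (hα : α = (6 - p) / 4) (hβ : β = (p - 2) / 4) :
    eLpNorm g (.ofReal p) μ ≤
      ENNReal.ofReal (s ^ (3 / p - 3 / 2)) ^ ((1 : ℝ) / 2) * (eLpNorm g 2 μ ^ (2 : ℝ)) ^ (α / p) *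
        (ENNReal.ofReal s * eLpNorm g 6 μ ^ (2 : ℝ)) ^ (3 * β / p) := by
  have hweight : ENNReal.ofReal (s ^ (3 / p - 3 / 2)) ^ ((1 : ℝ) / 2) *
      ENNReal.ofReal s ^ (3 * β / p) = 1 :=
    ENNReal.ofReal_rpow_rpow_mul_ofReal_rpow_eq_one hs
      (by rw [hβ]; field_simp; ring)
  calc eLpNorm g (.ofReal p) μ
      ≤ (eLpNorm g 2 μ ^ (2 : ℝ)) ^ (α / p) * (eLpNorm g 6 μ ^ (2 : ℝ)) ^ (3 * β / p) :=
        eLpNorm_le_eLpNorm_two_sq_rpow_mul_eLpNorm_six_sq_rpow hg hp2 hp6 hα hβ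
    _ = _ := by
        have : 0 ≤ 3 * β / p := by rw [hβ]; apply div_nonneg <;> linarith
        rw [ENNReal.mul_rpow_of_nonneg _ _ this, ← one_mul (_ * _), ← hweight]
        ring

end Interpolation

theorem stmt_4_general {X : Type*} [MeasurableSpace X] (μ : Measure X) [SigmaFinite μ]
    (f : ℝ → X → ℝ) (hf : Measurable (Function.uncurry f))
    (a b p : ℝ) (ha : 0 ≤ a) (hp2 : 2 ≤ p) (hp6 : p < 6)
    (α β : ℝ) (hα : α = (6 - p) / 4) (hβ : β = (p - 2) / 4) :
    ∫⁻ s in Set.Ioo a b, eLpNorm (f s) (ENNReal.ofReal p) μ ≤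
      (∫⁻ s in Set.Ioo a b, ENNReal.ofReal (s ^ (3 / p - 3 / 2))) ^ ((1 : ℝ)/2) *
      (∫⁻ s in Set.Ioo a b, eLpNorm (f s) 2 μ ^ (2 : ℝ)) ^ (α / p) *
      (∫⁻ s in Set.Ioo a b,
          ENNReal.ofReal s * eLpNorm (f s) 6 μ ^ (2 : ℝ)) ^ (3 * β / p) := by
  have hnorm {q : ℝ≥0∞} (hq : q ≠ 0) (hq' : q ≠ ⊤) :=
    measurable_eLpNorm_of_measurable_uncurry (μ := μ) hf hq hq'
  calc _ ≤ ∫⁻ s in Set.Ioo a b, ENNReal.ofReal (s ^ (3 / p - 3 / 2)) ^ ((1 : ℝ)/2) *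
        (eLpNorm (f s) 2 μ ^ (2 : ℝ)) ^ (α / p) *
        (ENNReal.ofReal s * eLpNorm (f s) 6 μ ^ (2 : ℝ)) ^ (3 * β / p) :=
        setLIntegral_mono' measurableSet_Ioo fun s hs ↦
          eLpNorm_le_weighted_eLpNorm_two_sq_mul_eLpNorm_six_sq
            hf.of_uncurry_left.aestronglyMeasurable (ha.trans_lt hs.1) hp2 hp6.le hα hβ
    _ ≤ _ := ENNReal.lintegral_rpow_mul_rpow_mul_rpow_le
        (measurable_id.pow_const _).ennreal_ofReal.aemeasurable
        ((hnorm two_ne_zero ofNat_ne_top).pow_const _).aemeasurable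
        (measurable_id.ennreal_ofReal.mul
          ((hnorm (by norm_num) ofNat_ne_top).pow_const _)).aemeasurable
        (by norm_num) (by rw [hα]; apply div_nonneg <;> linarith)
        (by rw [hβ]; apply div_nonneg <;> linarith)
        (by rw [hα, hβ]; field_simp; ring)

/-- Lemma 6.5 (interpolation): for `0 ≤ a < b < ∞`, `2 ≤ p < 6`, `α = (6-p)/4`,
`β = (p-2)/4`,
`∫ₐᵇ ‖f(s)‖_p ds ≤ (∫ₐᵇ s^{3/p - 3/2} ds)^{1/2} (∫ₐᵇ ‖f(s)‖₂² ds)^{α/p}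
  (∫ₐᵇ s ‖f(s)‖₆² ds)^{3β/p}`. -/
theorem stmt_4 {X : Type*} [MeasurableSpace X] (μ : Measure X) [SigmaFinite μ]
    (f : ℝ → X → ℝ) (hf : Measurable (Function.uncurry f))
    (a b p : ℝ) (ha : 0 ≤ a) (hab : a < b) (hp2 : 2 ≤ p) (hp6 : p < 6)
    (α β : ℝ) (hα : α = (6 - p) / 4) (hβ : β = (p - 2) / 4) :
    ∫⁻ s in Set.Ioo a b, eLpNorm (f s) (ENNReal.ofReal p) μ ≤
      (∫⁻ s in Set.Ioo a b, ENNReal.ofReal (s ^ (3 / p - 3 / 2))) ^ ((1 : ℝ)/2) *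
      (∫⁻ s in Set.Ioo a b, eLpNorm (f s) 2 μ ^ (2 : ℝ)) ^ (α / p) *
      (∫⁻ s in Set.Ioo a b,
          ENNReal.ofReal s * eLpNorm (f s) 6 μ ^ (2 : ℝ)) ^ (3 * β / p) :=
  stmt_4_general μ f hf a b p ha hp2 hp6 α β hα hβ
end

section
/- Let g : ℝ × E → 𝔸 be twice continuously differentiable with g(t,x) a unit of 𝔸 for every (t,x). Then for every (t,x) ∈ ℝ × E and every v ∈ E, the time derivative at t of the function τ ↦ g(τ,x)⁻¹ · (∂_v g)(τ,x) equals g(t,x)⁻¹ · ∂_v( y ↦ (∂_t g)(t,y) · g(t,y)⁻¹ )(x) · g(t,x). (This is identity (st3) of Lemma 9.4: in the paper's notation, (g⁻¹ dg)′ = g⁻¹ (d(g′g⁻¹)) g, the key identity of the Donaldson–Sadun gauge-transformation method.) -/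
/-!
Write `a = ∂ₜg`, `b = ∂ᵥg` and `g⁻¹` for the pointwise ring inverse, whose derivative along
`h` is `-g⁻¹ h g⁻¹`. The product rule gives `∂ₜ(g⁻¹ b) = -g⁻¹ a g⁻¹ b + g⁻¹ ∂ₜb` and
`∂ᵥ(a g⁻¹) = (∂ᵥa) g⁻¹ - a g⁻¹ b g⁻¹`. Conjugating the latter by `g` and using `g⁻¹ g = 1`
turns it into the former, once the mixed partials `∂ₜ∂ᵥg = ∂ᵥ∂ₜg` are identified
(symmetry of the second derivative of a `C²` map).
-/

open ContinuousLinearMap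
open scoped Ring

section RingInverse

variable {𝕜 : Type*} [NontriviallyNormedField 𝕜] {E : Type*} [NormedAddCommGroup E]
  [NormedSpace 𝕜 E] {R : Type*} [NormedRing R] [HasSummableGeomSeries R] [NormedAlgebra 𝕜 R]

theorem HasFDerivAt.ringInverse {h : E → R} {h' : E →L[𝕜] R} {z : E}
    (hh : HasFDerivAt h h' z) (hz : IsUnit (h z)) :
    HasFDerivAt (fun x => (h x)⁻¹ʳ) ((-mulLeftRight 𝕜 R (h z)⁻¹ʳ (h z)⁻¹ʳ).comp h') z := by
  obtain ⟨u, hu⟩ := hz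
  have hinv := hasFDerivAt_ringInverse (𝕜 := 𝕜) u
  rw [← Ring.inverse_unit u, hu] at hinv
  exact hinv.comp z hh

theorem HasDerivAt.ringInverse {h : 𝕜 → R} {h' : R} {s : 𝕜}
    (hh : HasDerivAt h h' s) (hs : IsUnit (h s)) :
    HasDerivAt (fun s => (h s)⁻¹ʳ) (-((h s)⁻¹ʳ * h' * (h s)⁻¹ʳ)) s := by
  simpa using (hh.hasFDerivAt.ringInverse hs).hasDerivAt

end RingInverse

section Partial

variable {𝕜 : Type*} [NontriviallyNormedField 𝕜] {E₁ E₂ F : Type*}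
  [NormedAddCommGroup E₁] [NormedSpace 𝕜 E₁] [NormedAddCommGroup E₂] [NormedSpace 𝕜 E₂]
  [NormedAddCommGroup F] [NormedSpace 𝕜 F] {f : E₁ × E₂ → F} {a : E₁} {b : E₂}

theorem DifferentiableAt.hasFDerivAt_comp_prodMk_right (hf : DifferentiableAt 𝕜 f (a, b)) :
    HasFDerivAt (fun y => f (a, y)) ((fderiv 𝕜 f (a, b)).comp (inr 𝕜 E₁ E₂)) b :=
  hf.hasFDerivAt.comp b (hasFDerivAt_prodMk_right a b)

theorem DifferentiableAt.fderiv_comp_prodMk_right_apply (hf : DifferentiableAt 𝕜 f (a, b))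
    (w : E₂) : fderiv 𝕜 (fun y => f (a, y)) b w = fderiv 𝕜 f (a, b) (0, w) := by
  simp [hf.hasFDerivAt_comp_prodMk_right.fderiv]

theorem DifferentiableAt.hasDerivAt_comp_prodMk_left {f : 𝕜 × E₂ → F} {s : 𝕜}
    (hf : DifferentiableAt 𝕜 f (s, b)) :
    HasDerivAt (fun s => f (s, b)) (fderiv 𝕜 f (s, b) (1, 0)) s :=
  hf.hasFDerivAt.comp_hasDerivAt s ((hasDerivAt_id s).prodMk (hasDerivAt_const s b))

end Partial

/-- Identity (st3) of Lemma 9.4 (Donaldson–Sadun): for a smooth unit-valued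
`g : ℝ × E → 𝔸`, the time derivative of `τ ↦ g(τ,x)⁻¹ ∂_v g(τ,x)` at `t` equals
`g(t,x)⁻¹ · ∂_v(y ↦ ∂_t g(t,y) · g(t,y)⁻¹)(x) · g(t,x)`. -/
theorem stmt_9 {E : Type*} [NormedAddCommGroup E] [NormedSpace ℝ E]
    {𝔸 : Type*} [NormedRing 𝔸] [NormedAlgebra ℝ 𝔸] [CompleteSpace 𝔸]
    (g : ℝ × E → 𝔸) (hg : ContDiff ℝ 2 g) (hunit : ∀ p : ℝ × E, IsUnit (g p))
    (t : ℝ) (x : E) (v : E) :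
    HasDerivAt
      (fun τ : ℝ => Ring.inverse (g (τ, x)) * fderiv ℝ (fun y => g (τ, y)) x v)
      (Ring.inverse (g (t, x)) *
        fderiv ℝ (fun y => deriv (fun τ => g (τ, y)) t * Ring.inverse (g (t, y))) x v
        * g (t, x)) t := by
  have hg1 : Differentiable ℝ g := hg.differentiable (by norm_num)
  have hg2 : Differentiable ℝ (fderiv ℝ g) :=
    (hg.fderiv_right (m := 1) (by norm_num)).differentiable (by norm_num)
  have hspace (τ : ℝ) : fderiv ℝ (fun y => g (τ, y)) x v = fderiv ℝ g (τ, x) (0, v) :=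
    (hg1 _).fderiv_comp_prodMk_right_apply v
  have htime (y : E) : deriv (fun τ => g (τ, y)) t = fderiv ℝ g (t, y) (1, 0) :=
    (hg1 _).hasDerivAt_comp_prodMk_left.deriv
  simp only [hspace, htime]
  have hlhs : HasDerivAt (fun τ => (g (τ, x))⁻¹ʳ * fderiv ℝ g (τ, x) (0, v)) _ t :=
    ((hg1 (t, x)).hasDerivAt_comp_prodMk_left.ringInverse (hunit _)).mul
      ((hg2 (t, x)).hasDerivAt_comp_prodMk_left.clm_apply (hasDerivAt_const t ((0 : ℝ), v)))
  have hrhs : HasFDerivAt (fun y => fderiv ℝ g (t, y) (1, 0) * (g (t, y))⁻¹ʳ) _ x :=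
    ((hg2 (t, x)).hasFDerivAt_comp_prodMk_right.clm_apply
      (hasFDerivAt_const ((1 : ℝ), (0 : E)) x)).mul'
      ((hg1 (t, x)).hasFDerivAt_comp_prodMk_right.ringInverse (hunit _))
  rw [hrhs.fderiv]
  convert hlhs using 1
  have hsymm := hg.contDiffAt.isSymmSndFDerivAt (x := (t, x)) (by simp) (1, 0) (0, v)
  have hi : (g (t, x))⁻¹ʳ * g (t, x) = 1 := Ring.inverse_mul_cancel _ (hunit _)
  simp only [neg_comp, smul_neg, comp_zero, zero_add, add_apply, neg_apply, smul_apply, comp_apply,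
    inr_apply, mulLeftRight_apply, smul_eq_mul, flip_apply, MulOpposite.smul_eq_mul_unop,
    MulOpposite.unop_op, map_zero, add_zero, hsymm, mul_add, add_mul, mul_neg, neg_mul, mul_assoc,
    hi, mul_one]
end

section
/- Let g : ℝ × E → 𝔸 be twice continuously differentiable with g(t,x) a unit of 𝔸 for every (t,x), let c : ℝ × E → 𝔸 be continuously differentiable, fix v ∈ E, and set W(t,x) := (∂_t g)(t,x) · g(t,x)⁻¹ and A(t,x) := g(t,x)⁻¹ · c(t,x) · g(t,x) + g(t,x)⁻¹ · (∂_v g)(t,x). Then for every (t,x), (∂_t A)(t,x) = g(t,x)⁻¹ · ( (∂_t c)(t,x) + [c(t,x), W(t,x)] + (∂_v W)(t,x) ) · g(t,x). (This is identity (a20) of Lemma 9.4: the time derivative of the gauge transform C^g = g⁻¹Cg + g⁻¹dg equals g⁻¹(C′ + [C,V] + dV)g with V = g′g⁻¹.) -/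
noncomputable section

/-- `W(t,x) = ∂_t g(t,x) · g(t,x)⁻¹` (the paper's `V = g′g⁻¹`). -/
def Wfun {E : Type*} [NormedAddCommGroup E] [NormedSpace ℝ E]
    {𝔸 : Type*} [NormedRing 𝔸] [NormedAlgebra ℝ 𝔸]
    (g : ℝ × E → 𝔸) (t : ℝ) (x : E) : 𝔸 :=
  deriv (fun τ => g (τ, x)) t * Ring.inverse (g (t, x))

/-- The gauge transform `A = g⁻¹ c g + g⁻¹ ∂_v g`. -/
def Afun {E : Type*} [NormedAddCommGroup E] [NormedSpace ℝ E]
    {𝔸 : Type*} [NormedRing 𝔸] [NormedAlgebra ℝ 𝔸]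
    (g c : ℝ × E → 𝔸) (v : E) (t : ℝ) (x : E) : 𝔸 :=
  Ring.inverse (g (t, x)) * c (t, x) * g (t, x)
    + Ring.inverse (g (t, x)) * fderiv ℝ (fun y => g (t, y)) x v

/-!
Put `X = ℝ × E`, so that `∂_t` and `∂_v` are the directional derivatives of maps on `X` along
`u = (1, 0)` and `w = (0, v)`. Differentiating `g⁻¹ c g + g⁻¹ ∂_w g` along `u`, with
`∂_u (g⁻¹) = -g⁻¹ (∂_u g) g⁻¹`, and inserting `g⁻¹ g = 1` regroups the terms as
`g⁻¹ (∂_u c + [c, V] + ∂_w V) g` with `V = (∂_u g) g⁻¹`. The only non-algebraic input is the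
symmetry `∂_u ∂_w g = ∂_w ∂_u g` of the second derivative of the `C²` map `g`.
-/

open ContinuousLinearMap

section PartialDerivatives

variable {𝕜 E F G : Type*} [NontriviallyNormedField 𝕜]
  [NormedAddCommGroup E] [NormedSpace 𝕜 E] [NormedAddCommGroup F] [NormedSpace 𝕜 F]
  [NormedAddCommGroup G] [NormedSpace 𝕜 G]

theorem deriv_comp_prodMk_left {f : 𝕜 × E → G} {t : 𝕜} {x : E}
    (hf : DifferentiableAt 𝕜 f (t, x)) :
    deriv (fun s => f (s, x)) t = fderiv 𝕜 f (t, x) (1, 0) :=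
  (hf.hasFDerivAt.comp_hasDerivAt t ((hasDerivAt_id t).prodMk (hasDerivAt_const t x))).deriv

theorem fderiv_comp_prodMk_right_apply {f : F × E → G} {t : F} {x : E}
    (hf : DifferentiableAt 𝕜 f (t, x)) (v : E) :
    fderiv 𝕜 (fun y => f (t, y)) x v = fderiv 𝕜 f (t, x) (0, v) := by
  have h : HasFDerivAt (fun y => f (t, y)) _ x :=
    hf.hasFDerivAt.comp x (hasFDerivAt_prodMk_right t x)
  simp [h.fderiv]

end PartialDerivatives

section GaugeTransform

variable {X 𝔸 : Type*} [NormedAddCommGroup X] [NormedSpace ℝ X]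
  [NormedRing 𝔸] [NormedAlgebra ℝ 𝔸]

def gaugeTransform (g c : X → 𝔸) (w : X) (q : X) : 𝔸 :=
  Ring.inverse (g q) * c q * g q + Ring.inverse (g q) * fderiv ℝ g q w

def rightLogDeriv (g : X → 𝔸) (u : X) (q : X) : 𝔸 :=
  fderiv ℝ g q u * Ring.inverse (g q)

variable [HasSummableGeomSeries 𝔸]

theorem HasFDerivAt.ringInverse_s10 {g : X → 𝔸} {g' : X →L[ℝ] 𝔸} {p : X}
    (hg : HasFDerivAt g g' p) (hunit : IsUnit (g p)) :
    HasFDerivAt (fun q => Ring.inverse (g q))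
      (-(mulLeftRight ℝ 𝔸 (Ring.inverse (g p)) (Ring.inverse (g p))).comp g') p := by
  obtain ⟨u, hu⟩ := hunit
  have hinv := hasFDerivAt_ringInverse (𝕜 := ℝ) u
  rw [← Ring.inverse_unit u, hu] at hinv
  exact hinv.comp p hg

variable {g c : X → 𝔸} {p : X}

theorem differentiableAt_gaugeTransform (hg : DifferentiableAt ℝ g p)
    (hg' : DifferentiableAt ℝ (fderiv ℝ g) p) (hc : DifferentiableAt ℝ c p)
    (hunit : IsUnit (g p)) (w : X) : DifferentiableAt ℝ (gaugeTransform g c w) p := by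
  unfold gaugeTransform
  fun_prop (disch := assumption)

theorem differentiableAt_rightLogDeriv (hg : DifferentiableAt ℝ g p)
    (hg' : DifferentiableAt ℝ (fderiv ℝ g) p) (hunit : IsUnit (g p)) (u : X) :
    DifferentiableAt ℝ (rightLogDeriv g u) p := by
  unfold rightLogDeriv
  fun_prop (disch := assumption)

theorem fderiv_gaugeTransform_apply (hg : ContDiffAt ℝ 2 g p) (hc : DifferentiableAt ℝ c p)
    (hunit : IsUnit (g p)) (u w : X) :
    fderiv ℝ (gaugeTransform g c w) p u =
      Ring.inverse (g p) * (fderiv ℝ c p u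
        + (c p * rightLogDeriv g u p - rightLogDeriv g u p * c p)
        + fderiv ℝ (rightLogDeriv g u) p w) * g p := by
  have hg₁ : HasFDerivAt g (fderiv ℝ g p) p := (hg.differentiableAt two_ne_zero).hasFDerivAt
  have hg₂ : HasFDerivAt (fderiv ℝ g) (fderiv ℝ (fderiv ℝ g) p) p :=
    ((hg.fderiv_right le_rfl).differentiableAt one_ne_zero).hasFDerivAt
  have hinv := hg₁.ringInverse_s10 hunit
  have hdir (z : X) : HasFDerivAt (fun q => fderiv ℝ g q z)
      ((apply ℝ 𝔸 z).comp (fderiv ℝ (fderiv ℝ g) p)) p :=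
    (apply ℝ 𝔸 z).hasFDerivAt.comp p hg₂
  have hA : HasFDerivAt (gaugeTransform g c w) _ p :=
    ((hinv.mul' hc.hasFDerivAt).mul' hg₁).add (hinv.mul' (hdir w))
  have hW : HasFDerivAt (rightLogDeriv g u) _ p := (hdir u).mul' hinv
  have hsymm : fderiv ℝ (fderiv ℝ g) p u w = fderiv ℝ (fderiv ℝ g) p w u :=
    hg.isSymmSndFDerivAt (by simp) u w
  rw [hA.fderiv, hW.fderiv]
  simp only [rightLogDeriv, hsymm, Pi.mul_apply, add_apply, neg_apply, smul_apply, comp_apply,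
    mulLeftRight_apply, apply_apply, smul_eq_mul, MulOpposite.smul_eq_mul_unop,
    MulOpposite.unop_op, smul_add, smul_neg, mul_add, add_mul, mul_sub, sub_mul, mul_neg, neg_mul,
    mul_assoc, Ring.inverse_mul_cancel _ hunit, mul_one]
  abel

end GaugeTransform

section Coordinates

variable {E 𝔸 : Type*} [NormedAddCommGroup E] [NormedSpace ℝ E]
  [NormedRing 𝔸] [NormedAlgebra ℝ 𝔸] {g : ℝ × E → 𝔸}

theorem Wfun_eq_rightLogDeriv (hg : Differentiable ℝ g) (t : ℝ) (x : E) :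
    Wfun g t x = rightLogDeriv g (1, 0) (t, x) := by
  rw [Wfun, rightLogDeriv, deriv_comp_prodMk_left (hg _)]

theorem Afun_eq_gaugeTransform (hg : Differentiable ℝ g) (c : ℝ × E → 𝔸) (v : E) (t : ℝ)
    (x : E) : Afun g c v t x = gaugeTransform g c (0, v) (t, x) := by
  rw [Afun, gaugeTransform, fderiv_comp_prodMk_right_apply (hg _)]

end Coordinates

/-- Identity (a20) of Lemma 9.4: `(C^g)′ = g⁻¹ (C′ + [C, V] + dV) g` with
`V = g′g⁻¹`, for the gauge transform `C^g = g⁻¹Cg + g⁻¹dg`. -/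
theorem stmt_10 {E : Type*} [NormedAddCommGroup E] [NormedSpace ℝ E]
    {𝔸 : Type*} [NormedRing 𝔸] [NormedAlgebra ℝ 𝔸] [CompleteSpace 𝔸]
    (g c : ℝ × E → 𝔸) (hg : ContDiff ℝ 2 g) (hc : ContDiff ℝ 1 c)
    (hunit : ∀ p : ℝ × E, IsUnit (g p)) (v : E) (t : ℝ) (x : E) :
    deriv (fun τ => Afun g c v τ x) t =
      Ring.inverse (g (t, x)) *
        (deriv (fun τ => c (τ, x)) t
          + (c (t, x) * Wfun g t x - Wfun g t x * c (t, x))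
          + fderiv ℝ (fun y => Wfun g t y) x v) * g (t, x) := by
  have hg₁ : Differentiable ℝ g := hg.differentiable two_ne_zero
  have hg₂ : Differentiable ℝ (fderiv ℝ g) := (hg.fderiv_right le_rfl).differentiable one_ne_zero
  have hc₁ : Differentiable ℝ c := hc.differentiable one_ne_zero
  simp only [Afun_eq_gaugeTransform hg₁, Wfun_eq_rightLogDeriv hg₁]
  rw [deriv_comp_prodMk_left
      (differentiableAt_gaugeTransform (hg₁ _) (hg₂ _) (hc₁ _) (hunit _) _),
    deriv_comp_prodMk_left (hc₁ _),
    fderiv_comp_prodMk_right_apply (differentiableAt_rightLogDeriv (hg₁ _) (hg₂ _) (hunit _) _)]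
  exact fderiv_gaugeTransform_apply hg.contDiffAt (hc₁ _) (hunit _) _ _
end
end

section
/- Let H be a complex Hilbert space, let V : ℝ → (H →L[ℂ] H) be continuous with (V t)† = −(V t) (skew-adjoint) for every t, let a ≤ b be reals, and let g : ℝ → (H →L[ℂ] H) satisfy HasDerivAt g ((V t).comp (g t)) t for every t ∈ [a, b], with g(a) = 1. Then for all s, t with a ≤ s ≤ t ≤ b, ‖g(t) − g(s)‖ ≤ ∫ₛᵗ ‖V(σ)‖ dσ in the operator norm. (This is the estimate of equations (sth19'')–(sth20'') in Lemma 9.7, which shows the gauge functions g_ε are uniformly Cauchy as ε ↓ 0 when ∫₀^T ‖d^*C(σ)‖_∞ dσ < ∞.) -/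
/-!
A skew-adjoint generator makes the evolution isometric: `⟪g t x, g t x⟫` has derivative
`⟪z, V z⟫ + ⟪V z, z⟫ = 0` with `z = g t x`, so `g t` is an isometry since `g a = 1`.
Hence `‖g'(σ)‖ = ‖V σ ∘ g σ‖ ≤ ‖V σ‖`, and the displacement of `g` is at most the integral of
this bound on its speed.
-/

open Set ContinuousLinearMap

section SkewAdjointEvolution

variable {H : Type*} [NormedAddCommGroup H] [InnerProductSpace ℂ H] [CompleteSpace H]

theorem inner_add_inner_apply_eq_zero_of_adjoint_eq_neg {T : H →L[ℂ] H}
    (hT : adjoint T = -T) (z : H) :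
    inner ℂ z (T z) + inner ℂ (T z) z = 0 := by
  have h := adjoint_inner_left T z z
  rw [hT, neg_apply, inner_neg_left] at h
  rw [← h, neg_add_cancel]

theorem norm_apply_eq_of_hasDerivAt_skewAdjoint_comp {V g : ℝ → H →L[ℂ] H} {a b : ℝ}
    (hskew : ∀ t ∈ Icc a b, adjoint (V t) = -V t)
    (hg : ∀ t ∈ Icc a b, HasDerivAt g ((V t).comp (g t)) t) (x : H) :
    ∀ t ∈ Icc a b, ‖g t x‖ = ‖g a x‖ := by
  have hgx : ∀ t ∈ Icc a b, HasDerivAt (fun τ ↦ g τ x) (V t (g t x)) t := fun t ht ↦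
    ((apply ℂ H x).restrictScalars ℝ).hasFDerivAt.comp_hasDerivAt t (hg t ht)
  have hconst : ∀ t ∈ Icc a b, inner ℂ (g t x) (g t x) = inner ℂ (g a x) (g a x) := by
    refine constant_of_has_deriv_right_zero
      (fun t ht ↦ (hgx t ht).continuousAt.continuousWithinAt.inner
        (hgx t ht).continuousAt.continuousWithinAt) fun t ht ↦ ?_
    have ht' := Ico_subset_Icc_self ht
    have hderiv := (hgx t ht').inner ℂ (hgx t ht')
    rw [inner_add_inner_apply_eq_zero_of_adjoint_eq_neg (hskew t ht')] at hderiv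
    exact hderiv.hasDerivWithinAt
  intro t ht
  have hsq := hconst t ht
  rw [inner_self_eq_norm_sq_to_K, inner_self_eq_norm_sq_to_K] at hsq
  exact (sq_eq_sq₀ (norm_nonneg _) (norm_nonneg _)).1 (by exact_mod_cast hsq)

end SkewAdjointEvolution

theorem stmt_18_general {H : Type*} [NormedAddCommGroup H] [InnerProductSpace ℂ H]
    [CompleteSpace H] (V : ℝ → H →L[ℂ] H) (hV : Continuous V)
    (hskew : ∀ t : ℝ, ContinuousLinearMap.adjoint (V t) = -(V t))
    (a b : ℝ) (g : ℝ → H →L[ℂ] H)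
    (hg : ∀ t ∈ Set.Icc a b, HasDerivAt g ((V t).comp (g t)) t)
    (hga : g a = 1) :
    ∀ s t : ℝ, a ≤ s → s ≤ t → t ≤ b →
      ‖g t - g s‖ ≤ ∫ σ in s..t, ‖V σ‖ := by
  intro s t hs hst htb
  have hsub : Icc s t ⊆ Icc a b := Icc_subset_Icc hs htb
  have hcontract : ∀ σ ∈ Icc a b, ‖g σ‖ ≤ 1 := fun σ hσ ↦
    (g σ).opNorm_le_bound zero_le_one fun x ↦ by
      rw [norm_apply_eq_of_hasDerivAt_skewAdjoint_comp (fun t _ ↦ hskew t) hg x σ hσ, hga,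
        one_apply_eq_self, one_mul]
  refine norm_sub_le_integral_of_norm_deriv_le_of_le hst
    (fun σ hσ ↦ (hg σ (hsub hσ)).continuousAt.continuousWithinAt)
    (fun σ hσ ↦ (hg σ (hsub (Ioo_subset_Icc_self hσ))).differentiableAt.differentiableWithinAt)
    (Filter.Eventually.of_forall fun σ hσ ↦ ?_) (hV.norm.intervalIntegrable s t)
  have hσ' := hsub (Ioo_subset_Icc_self hσ)
  rw [(hg σ hσ').deriv]
  exact ((V σ).opNorm_comp_le (g σ)).trans
    (mul_le_of_le_one_right (norm_nonneg _) (hcontract σ hσ'))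

/-- The estimate (sth19'')–(sth20'') of Lemma 9.7: for a solution of
`g′(t) = V(t) ∘ g(t)` with skew-adjoint `V` and `g(a) = 1`,
`‖g(t) − g(s)‖ ≤ ∫ₛᵗ ‖V(σ)‖ dσ` in operator norm for `a ≤ s ≤ t ≤ b`. -/
theorem stmt_18 {H : Type*} [NormedAddCommGroup H] [InnerProductSpace ℂ H]
    [CompleteSpace H] (V : ℝ → H →L[ℂ] H) (hV : Continuous V)
    (hskew : ∀ t : ℝ, ContinuousLinearMap.adjoint (V t) = -(V t))
    (a b : ℝ) (hab : a ≤ b) (g : ℝ → H →L[ℂ] H)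
    (hg : ∀ t ∈ Set.Icc a b, HasDerivAt g ((V t).comp (g t)) t)
    (hga : g a = 1) :
    ∀ s t : ℝ, a ≤ s → s ≤ t → t ≤ b →
      ‖g t - g s‖ ≤ ∫ σ in s..t, ‖V σ‖ :=
  stmt_18_general V hV hskew a b g hg hga
end

section
/- Let a ≥ 0 and b > 0 be real numbers and let f : [0, b] → ℝ be continuous with f(0) = 0 and f(t) ≥ 0 for all t ∈ [0, b], and differentiable on (0, b] with f′(t) ≤ a · t^(−3/4) · f(t) for every t ∈ (0, b]. Then f(t) = 0 for every t ∈ [0, b]. (This singular Gronwall lemma, proved in the paper via the observation that e^(−4a·t^(1/4)) f(t) is nonincreasing, is the engine of the uniqueness Theorem 10.1 for strong solutions of the Yang–Mills heat equation, applied with f(t) = ‖A₁(t) − A₂(t)‖₂².) -/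
/-- The singular Gronwall lemma behind the uniqueness Theorem 10.1: if `f ≥ 0` is
continuous on `[0,b]` with `f(0) = 0`, differentiable on `(0,b]` with
`f′(t) ≤ a·t^{-3/4}·f(t)`, then `f ≡ 0` on `[0,b]`. -/
theorem stmt_19 (a b : ℝ) (ha : 0 ≤ a) (hb : 0 < b) (f : ℝ → ℝ)
    (hcont : ContinuousOn f (Set.Icc 0 b)) (hf0 : f 0 = 0)
    (hnonneg : ∀ t ∈ Set.Icc (0 : ℝ) b, 0 ≤ f t)
    (hdiff : ∀ t ∈ Set.Ioc (0 : ℝ) b, DifferentiableAt ℝ f t)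
    (hderiv : ∀ t ∈ Set.Ioc (0 : ℝ) b, deriv f t ≤ a * t ^ (-(3 : ℝ)/4) * f t) :
    ∀ t ∈ Set.Icc (0 : ℝ) b, f t = 0 := by
  set g : ℝ → ℝ := fun t => Real.exp (-(4 * a) * t ^ (4⁻¹ : ℝ)) * f t with hg
  have hrpow_cont : Continuous fun t : ℝ => t ^ (4⁻¹ : ℝ) := by
    rw [continuous_iff_continuousAt]
    intro x
    exact Real.continuousAt_rpow_const x _ (Or.inr (by norm_num))
  have hgc : ContinuousOn g (Set.Icc 0 b) := by
    exact (((continuous_const.mul hrpow_cont).rexp).continuousOn).mul hcont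
  have key : ∀ t ∈ Set.Ioo (0 : ℝ) b,
      HasDerivAt g (Real.exp (-(4 * a) * t ^ (4⁻¹ : ℝ)) *
        (-(4 * a) * (4⁻¹ * t ^ ((4⁻¹ : ℝ) - 1))) * f t +
        Real.exp (-(4 * a) * t ^ (4⁻¹ : ℝ)) * deriv f t) t := by
    intro t ht
    have ht0 : (0 : ℝ) < t := ht.1
    have hr : HasDerivAt (fun x : ℝ => x ^ (4⁻¹ : ℝ))
        ((4⁻¹ : ℝ) * t ^ ((4⁻¹ : ℝ) - 1)) t :=
      Real.hasDerivAt_rpow_const (Or.inl ht0.ne')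
    have hh := hr.const_mul (-(4 * a))
    have hexp := hh.exp
    have hft : HasDerivAt f (deriv f t) t :=
      (hdiff t ⟨ht0, ht.2.le⟩).hasDerivAt
    exact hexp.mul hft
  have hanti : AntitoneOn g (Set.Icc 0 b) := by
    apply antitoneOn_of_deriv_nonpos (convex_Icc 0 b) hgc
    · intro t ht
      rw [interior_Icc] at ht
      exact (key t ht).differentiableAt.differentiableWithinAt
    · intro t ht
      rw [interior_Icc] at ht
      rw [(key t ht).deriv]
      have ht0 : (0 : ℝ) < t := ht.1
      have hE : 0 < Real.exp (-(4 * a) * t ^ (4⁻¹ : ℝ)) := Real.exp_pos _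
      have hexp_eq : ((4⁻¹ : ℝ) - 1) = -(3 : ℝ)/4 := by norm_num
      have hle := hderiv t ⟨ht0, ht.2.le⟩
      rw [hexp_eq]
      nlinarith [hnonneg t ⟨ht0.le, ht.2.le⟩, Real.rpow_pos_of_pos ht0 (-(3 : ℝ)/4)]
  intro t ht
  have hg0 : g 0 = 0 := by simp [hg, hf0]
  have h1 : g t ≤ 0 := by
    have := hanti (Set.left_mem_Icc.mpr hb.le) ht ht.1
    rwa [hg0] at this
  have hE : 0 < Real.exp (-(4 * a) * t ^ (4⁻¹ : ℝ)) := Real.exp_pos _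
  have h2 : 0 ≤ g t := mul_nonneg hE.le (hnonneg t ht)
  have h3 : g t = 0 := le_antisymm h1 h2
  have : Real.exp (-(4 * a) * t ^ (4⁻¹ : ℝ)) * f t = 0 := h3
  rcases mul_eq_zero.mp this with h | h
  · exact absurd h hE.ne'
  · exact h
end
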